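/- One has 0 < liminf_{α↓1} (α−1)²·∑_{k=2}^∞ k·θ_α(k)·log k ≤ limsup_{α↓1} (α−1)²·∑_{k=2}^∞ k·θ_α(k)·log k < ∞, where the liminf and limsup are taken as the real parameter α tends to 1 from the right. -/

import Mathlib

/-
For `k ≥ 2` one has `k θ_α(k) = α ∏_{i=1}^{k-2} (1 - (α-1)/i) / (k-1)`. Comparing the product
with `exp (-(α-1) H_{k-2})` and using `log (n+1) ≤ H_n ≤ 1 + log n` squeezes `k θ_α(k)` between
constant multiples of `k^(-1-2(α-1))` and `k^(-1-(α-1))` when `1 < α ≤ 3/2`. By the integral test,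
with `∫_3^∞ x^(-1-s) log x dx = 3^(-s) (log 3 + 1/s) / s`, the series `∑ k^(-1-s) log k` is of
order `s⁻²` for `0 < s ≤ 1`, so `(α-1)² ∑ k θ_α(k) log k` stays between two positive constants.
-/

open scoped BigOperators

/-- The `α`-offspring distribution: `θ_α(0) = θ_α(1) = 0` and
`θ_α(k) = α (2−α)(3−α)⋯(k−1−α) / k! = α Γ(k−α)/(k! Γ(2−α))` for `k ≥ 2`. -/
noncomputable def theta (α : ℝ) (k : ℕ) : ℝ :=
  if k < 2 then 0 else α * (∏ j ∈ Finset.Ico 2 k, ((j : ℝ) - α)) / (Nat.factorial k)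

open Real Set Filter Topology MeasureTheory

lemma exp_neg_two_mul_le_one_sub {x : ℝ} (hx0 : 0 ≤ x) (hx : x ≤ 1 / 2) :
    exp (-2 * x) ≤ 1 - x := by
  have h : 1 ≤ (1 + 2 * x) * (1 - x) := by nlinarith
  calc exp (-2 * x) = (exp (2 * x))⁻¹ := by rw [← exp_neg]; ring_nf
    _ ≤ (1 + 2 * x)⁻¹ := inv_anti₀ (by positivity) (by linarith [add_one_le_exp (2 * x)])
    _ ≤ 1 - x := by rw [inv_le_iff_one_le_mul₀ (by positivity)]; linarith

lemma rpow_mul_log_nonneg {x : ℝ} (p : ℝ) (hx : 1 ≤ x) : 0 ≤ x ^ p * log x :=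
  mul_nonneg (rpow_nonneg (by linarith) p) (log_nonneg hx)

lemma antitoneOn_rpow_neg_one_sub_mul_log {s : ℝ} (hs : 0 ≤ s) :
    AntitoneOn (fun x : ℝ => x ^ (-1 - s) * log x) (Ici 3) := by
  have hderiv : ∀ x ∈ Ici (3 : ℝ), HasDerivAt (fun x : ℝ => x ^ (-1 - s) * log x)
      (x ^ (-1 - s - 1) * (1 - (1 + s) * log x)) x := by
    intro x (hx : 3 ≤ x)
    have hx0 : 0 < x := by linarith
    refine ((hasDerivAt_rpow_const (p := -1 - s) (Or.inl hx0.ne')).mul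
      (hasDerivAt_log hx0.ne')).congr_deriv ?_
    rw [sub_eq_add_neg _ (1 : ℝ), rpow_add hx0, rpow_neg_one]
    field_simp
    ring
  refine antitoneOn_of_deriv_nonpos (convex_Ici 3)
    (fun x hx => (hderiv x hx).continuousAt.continuousWithinAt)
    (fun x hx => (hderiv x (interior_subset hx)).differentiableAt.differentiableWithinAt)
    fun x hx => ?_
  rw [interior_Ici] at hx
  have hx0 : 0 < x := by linarith [hx.out]
  have hlog : 1 ≤ log x := by
    rw [le_log_iff_exp_le hx0]
    linarith [exp_one_lt_d9, hx.out]
  rw [(hderiv x hx.out.le).deriv]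
  exact mul_nonpos_of_nonneg_of_nonpos (rpow_nonneg hx0.le _) (by nlinarith)

lemma hasDerivAt_rpow_neg_mul_log_add_inv {s x : ℝ} (hs : s ≠ 0) (hx : 0 < x) :
    HasDerivAt (fun x : ℝ => -(x ^ (-s) * (log x + 1 / s)) / s) (x ^ (-1 - s) * log x) x := by
  refine ((((hasDerivAt_rpow_const (p := -s) (Or.inl hx.ne')).mul
    ((hasDerivAt_log hx.ne').add_const (1 / s))).neg).div_const s).congr_deriv ?_
  rw [show -s - 1 = -1 - s by ring, show -1 - s = -s + -1 by ring, rpow_add hx, rpow_neg_one]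
  field_simp
  ring

lemma tendsto_rpow_neg_mul_log_add_inv {s : ℝ} (hs : 0 < s) :
    Tendsto (fun x : ℝ => -(x ^ (-s) * (log x + 1 / s)) / s) atTop (𝓝 0) := by
  have hlog : Tendsto (fun x : ℝ => x ^ (-s) * log x) atTop (𝓝 0) :=
    (isLittleO_log_rpow_atTop hs).tendsto_div_nhds_zero.congr' <|
      (eventually_gt_atTop 0).mono fun x hx => by simp only [rpow_neg hx.le]; ring
  simpa [mul_add] using ((hlog.add ((tendsto_rpow_neg_atTop hs).mul_const (1 / s))).neg).div_const s

lemma integrableOn_Ioi_rpow_neg_one_sub_mul_log {s a : ℝ} (hs : 0 < s) (ha : 1 ≤ a) :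
    IntegrableOn (fun x : ℝ => x ^ (-1 - s) * log x) (Ioi a) :=
  integrableOn_Ioi_deriv_of_nonneg'
    (fun x (hx : a ≤ x) => hasDerivAt_rpow_neg_mul_log_add_inv hs.ne' (by linarith))
    (fun x (hx : a < x) => rpow_mul_log_nonneg _ (by linarith))
    (tendsto_rpow_neg_mul_log_add_inv hs)

lemma integral_Ioi_rpow_neg_one_sub_mul_log {s a : ℝ} (hs : 0 < s) (ha : 1 ≤ a) :
    ∫ x in Ioi a, x ^ (-1 - s) * log x = a ^ (-s) * (log a + 1 / s) / s := by
  rw [integral_Ioi_of_hasDerivAt_of_nonneg'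
    (fun x (hx : a ≤ x) => hasDerivAt_rpow_neg_mul_log_add_inv hs.ne' (by linarith))
    (fun x (hx : a < x) => rpow_mul_log_nonneg _ (by linarith))
    (tendsto_rpow_neg_mul_log_add_inv hs)]
  ring

lemma summable_rpow_neg_one_sub_mul_log {s : ℝ} (hs : 0 < s) :
    Summable fun n : ℕ => (n : ℝ) ^ (-1 - s) * log n :=
  (antitoneOn_rpow_neg_one_sub_mul_log hs.le).summable_of_integrableOn_Ioi (N := 3)
    (by exact_mod_cast integrableOn_Ioi_rpow_neg_one_sub_mul_log hs (by norm_num))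
    fun x (hx : (3 : ℝ) < x) => rpow_mul_log_nonneg _ (by linarith)

lemma rpow_neg_one_sub_mul_log_le_one {s x : ℝ} (hs : 0 ≤ s) (hx : 1 ≤ x) :
    x ^ (-1 - s) * log x ≤ 1 := by
  have hx0 : 0 < x := by linarith
  calc x ^ (-1 - s) * log x ≤ x ^ (-1 : ℝ) * x :=
        mul_le_mul (rpow_le_rpow_of_exponent_le hx (by linarith))
          ((log_le_sub_one_of_pos hx0).trans (by linarith)) (log_nonneg hx) (by positivity)
    _ = 1 := by rw [rpow_neg_one, inv_mul_cancel₀ hx0.ne']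

lemma tsum_rpow_neg_one_sub_mul_log_le {s : ℝ} (hs : 0 < s) (hs1 : s ≤ 1) :
    ∑' n : ℕ, (n : ℝ) ^ (-1 - s) * log n ≤ 7 / s ^ 2 := by
  set f : ℝ → ℝ := fun x => x ^ (-1 - s) * log x
  have hhead : ∑ n ∈ Finset.range 4, f n ≤ 4 := by
    refine (Finset.sum_le_card_nsmul _ _ 1 fun n _ => ?_).trans (by norm_num)
    rcases n.eq_zero_or_pos with rfl | hn
    · simp [f]
    · exact rpow_neg_one_sub_mul_log_le_one hs.le (by exact_mod_cast hn)
  have htail : ∑' n : ℕ, f (n + 4 : ℕ) ≤ 3 / s ^ 2 := by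
    have h := (antitoneOn_rpow_neg_one_sub_mul_log hs.le).tsum_comp_add_le_integral 3
      (by exact_mod_cast integrableOn_Ioi_rpow_neg_one_sub_mul_log hs (by norm_num))
      fun x (hx : ((3 : ℕ) : ℝ) < x) => rpow_mul_log_nonneg _ (by push_cast at hx; linarith)
    rw [Nat.cast_ofNat, integral_Ioi_rpow_neg_one_sub_mul_log hs (by norm_num)] at h
    refine h.trans ?_
    have h3 : (3 : ℝ) ^ (-s) ≤ 1 := rpow_le_one_of_one_le_of_nonpos (by norm_num) (by linarith)
    have hlog3 : log 3 ≤ 2 / s := by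
      have := log_le_sub_one_of_pos (show (0 : ℝ) < 3 by norm_num)
      rw [le_div_iff₀ hs]; nlinarith
    calc (3 : ℝ) ^ (-s) * (log 3 + 1 / s) / s ≤ 1 * (2 / s + 1 / s) / s := by
          gcongr
    _ = 3 / s ^ 2 := by field_simp; ring
  rw [← (summable_rpow_neg_one_sub_mul_log hs).sum_add_tsum_nat_add 4]
  calc _ ≤ (4 : ℝ) + 3 / s ^ 2 := add_le_add hhead htail
    _ ≤ 7 / s ^ 2 := by
      have : 1 ≤ 1 / s ^ 2 := by rw [le_div_iff₀ (by positivity)]; nlinarith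
      linarith [show 7 / s ^ 2 = 4 * (1 / s ^ 2) + 3 / s ^ 2 by ring]

lemma le_tsum_rpow_neg_one_sub_mul_log {s : ℝ} (hs : 0 < s) (hs1 : s ≤ 1) :
    1 / (3 * s ^ 2) ≤ ∑' n : ℕ, (n : ℝ) ^ (-1 - s) * log n := by
  set f : ℝ → ℝ := fun x => x ^ (-1 - s) * log x
  have hf : Summable fun n : ℕ => f n := summable_rpow_neg_one_sub_mul_log hs
  have hhead : 0 ≤ ∑ n ∈ Finset.range 3, f n := Finset.sum_nonneg fun n _ => by
    rcases n.eq_zero_or_pos with rfl | hn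
    · simp [f]
    · exact rpow_mul_log_nonneg _ (by exact_mod_cast hn)
  have htail := (antitoneOn_rpow_neg_one_sub_mul_log hs.le).integral_le_tsum_comp_add 3 hf
    fun x (hx : ((3 : ℕ) : ℝ) < x) => rpow_mul_log_nonneg _ (by push_cast at hx; linarith)
  rw [Nat.cast_ofNat, integral_Ioi_rpow_neg_one_sub_mul_log hs (by norm_num)] at htail
  rw [← hf.sum_add_tsum_nat_add 3]
  have h3 : (3 : ℝ) ^ (-1 : ℝ) ≤ 3 ^ (-s) := rpow_le_rpow_of_exponent_le (by norm_num) (by linarith)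
  rw [rpow_neg_one] at h3
  calc 1 / (3 * s ^ 2) = 3⁻¹ * (0 + 1 / s) / s := by field_simp; ring
    _ ≤ (3 : ℝ) ^ (-s) * (log 3 + 1 / s) / s := by
      gcongr
      exact log_nonneg (by norm_num)
    _ ≤ _ := by linarith

open Finset in
lemma theta_nonneg {α : ℝ} (h0 : 0 ≤ α) (h2 : α ≤ 2) (k : ℕ) : 0 ≤ theta α k := by
  unfold theta
  split_ifs
  · exact le_rfl
  · refine div_nonneg (mul_nonneg h0 (prod_nonneg fun j hj => ?_)) (Nat.cast_nonneg _)
    have : (2 : ℝ) ≤ j := by exact_mod_cast (mem_Ico.mp hj).1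
    linarith

open Finset in
lemma natCast_add_two_mul_theta (α : ℝ) (n : ℕ) :
    ((n + 2 : ℕ) : ℝ) * theta α (n + 2)
      = α * (∏ i ∈ range n, (1 - (α - 1) / (i + 1))) / (n + 1) := by
  have hprod : ∏ j ∈ Ico 2 (n + 2), ((j : ℝ) - α)
      = n.factorial * ∏ i ∈ range n, (1 - (α - 1) / (i + 1)) := by
    rw [prod_Ico_eq_prod_range, Nat.add_sub_cancel, ← prod_range_add_one_eq_factorial,
      Nat.cast_prod, ← prod_mul_distrib]
    refine prod_congr rfl fun i _ => ?_
    push_cast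
    field_simp
    ring
  rw [theta, if_neg (by omega), hprod, Nat.factorial_succ, Nat.factorial_succ]
  push_cast
  field_simp
  ring

lemma one_sub_div_natCast_add_one_nonneg {β : ℝ} (hβ : β ≤ 1) (i : ℕ) :
    0 ≤ 1 - β / ((i : ℝ) + 1) := by
  rw [sub_nonneg, div_le_one (by positivity)]
  linarith [(i.cast_nonneg : (0 : ℝ) ≤ i)]

open Finset in
lemma prod_one_sub_div_le_rpow {β : ℝ} (hβ0 : 0 ≤ β) (hβ1 : β ≤ 1) (n : ℕ) :
    ∏ i ∈ range n, (1 - β / (i + 1)) ≤ ((n : ℝ) + 1) ^ (-β) := by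
  calc ∏ i ∈ range n, (1 - β / (i + 1)) ≤ ∏ i ∈ range n, exp (-(β / (i + 1))) := by
        refine prod_le_prod (fun i _ => one_sub_div_natCast_add_one_nonneg hβ1 i) fun i _ => ?_
        linarith [add_one_le_exp (-(β / (i + 1)))]
    _ = exp (-β * harmonic n) := by
        rw [← exp_sum, harmonic, Rat.cast_sum, mul_sum]
        push_cast
        ring_nf
    _ ≤ exp (-β * log (n + 1)) := by
        refine exp_le_exp.mpr (mul_le_mul_of_nonpos_left ?_ (by linarith))
        exact_mod_cast log_add_one_le_harmonic n
    _ = ((n : ℝ) + 1) ^ (-β) := by rw [rpow_def_of_pos (by positivity), mul_comm]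

open Finset in
lemma exp_le_prod_one_sub_div {β : ℝ} (hβ0 : 0 ≤ β) (hβ : β ≤ 1 / 2) (n : ℕ) :
    exp (-2 * β * (1 + log n)) ≤ ∏ i ∈ range n, (1 - β / (i + 1)) := by
  calc exp (-2 * β * (1 + log n)) ≤ exp (-2 * β * harmonic n) := by
        refine exp_le_exp.mpr (mul_le_mul_of_nonpos_left ?_ (by linarith))
        exact_mod_cast harmonic_le_one_add_log n
    _ = ∏ i ∈ range n, exp (-2 * (β / (i + 1))) := by
        rw [← exp_sum, harmonic, Rat.cast_sum, mul_sum]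
        push_cast
        ring_nf
    _ ≤ ∏ i ∈ range n, (1 - β / (i + 1)) := by
        refine prod_le_prod (fun i _ => (exp_pos _).le) fun i _ => ?_
        have hi : (1 : ℝ) ≤ i + 1 := by linarith [(i.cast_nonneg : (0 : ℝ) ≤ i)]
        exact exp_neg_two_mul_le_one_sub (by positivity)
          ((div_le_self hβ0 hi).trans hβ)

lemma natCast_mul_theta_le {α : ℝ} (hα1 : 1 < α) (hα2 : α ≤ 2) {k : ℕ} (hk : 2 ≤ k) :
    (k : ℝ) * theta α k ≤ 8 * (k : ℝ) ^ (-1 - (α - 1)) := by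
  obtain ⟨n, rfl⟩ : ∃ n, k = n + 2 := ⟨k - 2, by omega⟩
  rw [natCast_add_two_mul_theta]
  push_cast
  have hn1 : (0 : ℝ) < n + 1 := by positivity
  have hP := prod_one_sub_div_le_rpow (β := α - 1) (by linarith) (by linarith) n
  have hshift : ((n : ℝ) + 1) ^ (-(α - 1) - 1) ≤ 4 * ((n : ℝ) + 2) ^ (-(α - 1) - 1) := by
    have h2 : (2 : ℝ) ^ (-2 : ℝ) ≤ 2 ^ (-(α - 1) - 1) :=
      rpow_le_rpow_of_exponent_le (by norm_num) (by linarith)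
    have h4 : (2 : ℝ) ^ (-2 : ℝ) = 1 / 4 := by norm_num [rpow_neg, rpow_two]
    calc ((n : ℝ) + 1) ^ (-(α - 1) - 1) ≤ (((n : ℝ) + 2) / 2) ^ (-(α - 1) - 1) :=
          rpow_le_rpow_of_nonpos (by positivity) (by linarith) (by linarith)
      _ = ((n : ℝ) + 2) ^ (-(α - 1) - 1) / 2 ^ (-(α - 1) - 1) :=
          div_rpow (by positivity) (by norm_num) _
      _ ≤ ((n : ℝ) + 2) ^ (-(α - 1) - 1) / (1 / 4) := by gcongr; rwa [← h4]
      _ = 4 * ((n : ℝ) + 2) ^ (-(α - 1) - 1) := by ring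
  calc α * (∏ i ∈ Finset.range n, (1 - (α - 1) / (i + 1))) / (n + 1)
      ≤ 2 * ((n : ℝ) + 1) ^ (-(α - 1)) / (n + 1) := by
        gcongr
        exact Finset.prod_nonneg fun i _ => one_sub_div_natCast_add_one_nonneg (by linarith) i
    _ = 2 * ((n : ℝ) + 1) ^ (-(α - 1) - 1) := by rw [rpow_sub_one hn1.ne']; ring
    _ ≤ 8 * ((n : ℝ) + 2) ^ (-1 - (α - 1)) := by
        rw [show -1 - (α - 1) = -(α - 1) - 1 by ring]
        linarith

lemma exp_neg_one_mul_le_natCast_mul_theta {α : ℝ} (hα1 : 1 < α) (hα2 : α ≤ 3 / 2) {k : ℕ}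
    (hk : 2 ≤ k) : exp (-1) * (k : ℝ) ^ (-1 - 2 * (α - 1)) ≤ (k : ℝ) * theta α k := by
  obtain ⟨n, rfl⟩ : ∃ n, k = n + 2 := ⟨k - 2, by omega⟩
  rw [natCast_add_two_mul_theta]
  push_cast
  have hn2 : (0 : ℝ) < n + 2 := by positivity
  have hlog : log n ≤ log (n + 2) := by
    rcases n.eq_zero_or_pos with rfl | hn
    · simpa using log_nonneg (by norm_num : (1 : ℝ) ≤ 0 + 2)
    · exact log_le_log (by exact_mod_cast hn) (by linarith)
  have hP := exp_le_prod_one_sub_div (β := α - 1) (by linarith) (by linarith) n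
  have hexp : exp (-1) * ((n : ℝ) + 2) ^ (-(2 * (α - 1))) ≤ exp (-2 * (α - 1) * (1 + log n)) := by
    rw [rpow_def_of_pos hn2, ← exp_add]
    exact exp_le_exp.mpr (by nlinarith)
  calc exp (-1) * ((n : ℝ) + 2) ^ (-1 - 2 * (α - 1))
      = exp (-1) * ((n : ℝ) + 2) ^ (-(2 * (α - 1))) / (n + 2) := by
        rw [show -1 - 2 * (α - 1) = -(2 * (α - 1)) - 1 by ring, rpow_sub_one hn2.ne']; ring
    _ ≤ (∏ i ∈ Finset.range n, (1 - (α - 1) / (i + 1))) / (n + 2) := by gcongr; exact hexp.trans hP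
    _ ≤ (∏ i ∈ Finset.range n, (1 - (α - 1) / (i + 1))) / (n + 1) := by
        gcongr
        · exact hP.trans' (exp_pos _).le
        · linarith
    _ ≤ α * (∏ i ∈ Finset.range n, (1 - (α - 1) / (i + 1))) / (n + 1) := by
        gcongr
        exact le_mul_of_one_le_left (hP.trans' (exp_pos _).le) hα1.le

lemma natCast_mul_theta_mul_log_le {α : ℝ} (hα1 : 1 < α) (hα2 : α ≤ 2) (k : ℕ) :
    (k : ℝ) * theta α k * log k ≤ 8 * ((k : ℝ) ^ (-1 - (α - 1)) * log k) := by
  rcases lt_or_ge k 2 with hk | hk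
  · simp only [theta, if_pos hk, mul_zero, zero_mul]
    exact mul_nonneg (by norm_num) (mul_nonneg (by positivity) (log_natCast_nonneg k))
  · rw [← mul_assoc]
    exact mul_le_mul_of_nonneg_right (natCast_mul_theta_le hα1 hα2 hk) (log_natCast_nonneg k)

lemma exp_neg_one_mul_le_natCast_mul_theta_mul_log {α : ℝ} (hα1 : 1 < α) (hα2 : α ≤ 3 / 2)
    (k : ℕ) : exp (-1) * ((k : ℝ) ^ (-1 - 2 * (α - 1)) * log k) ≤ (k : ℝ) * theta α k * log k := by
  rcases lt_or_ge k 2 with hk | hk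
  · interval_cases k <;> simp
  · rw [← mul_assoc]
    exact mul_le_mul_of_nonneg_right (exp_neg_one_mul_le_natCast_mul_theta hα1 hα2 hk)
      (log_natCast_nonneg k)

lemma summable_natCast_mul_theta_mul_log {α : ℝ} (hα1 : 1 < α) (hα2 : α ≤ 2) :
    Summable fun k : ℕ => (k : ℝ) * theta α k * log k :=
  ((summable_rpow_neg_one_sub_mul_log (sub_pos.mpr hα1)).mul_left 8).of_nonneg_of_le
    (fun k => mul_nonneg (mul_nonneg k.cast_nonneg (theta_nonneg (by linarith) (by linarith) k))
      (log_natCast_nonneg k))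
    (natCast_mul_theta_mul_log_le hα1 hα2)

lemma tsum_natCast_mul_theta_mul_log_le {α : ℝ} (hα1 : 1 < α) (hα2 : α ≤ 2) :
    ∑' k : ℕ, (k : ℝ) * theta α k * log k ≤ 56 / (α - 1) ^ 2 := by
  have hβ : 0 < α - 1 := sub_pos.mpr hα1
  calc ∑' k : ℕ, (k : ℝ) * theta α k * log k
      ≤ ∑' k : ℕ, 8 * ((k : ℝ) ^ (-1 - (α - 1)) * log k) :=
        (summable_natCast_mul_theta_mul_log hα1 hα2).tsum_le_tsum
          (natCast_mul_theta_mul_log_le hα1 hα2)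
          ((summable_rpow_neg_one_sub_mul_log hβ).mul_left 8)
    _ ≤ 8 * (7 / (α - 1) ^ 2) := by
        rw [tsum_mul_left]
        gcongr
        exact tsum_rpow_neg_one_sub_mul_log_le hβ (by linarith)
    _ = 56 / (α - 1) ^ 2 := by ring

lemma le_tsum_natCast_mul_theta_mul_log {α : ℝ} (hα1 : 1 < α) (hα2 : α ≤ 3 / 2) :
    exp (-1) / (12 * (α - 1) ^ 2) ≤ ∑' k : ℕ, (k : ℝ) * theta α k * log k := by
  have hs : 0 < 2 * (α - 1) := by linarith
  calc exp (-1) / (12 * (α - 1) ^ 2) = exp (-1) * (1 / (3 * (2 * (α - 1)) ^ 2)) := by ring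
    _ ≤ exp (-1) * ∑' k : ℕ, (k : ℝ) ^ (-1 - 2 * (α - 1)) * log k := by
        gcongr
        exact le_tsum_rpow_neg_one_sub_mul_log hs (by linarith)
    _ ≤ ∑' k : ℕ, (k : ℝ) * theta α k * log k := by
        rw [← tsum_mul_left]
        exact ((summable_rpow_neg_one_sub_mul_log hs).mul_left _).tsum_le_tsum
          (exp_neg_one_mul_le_natCast_mul_theta_mul_log hα1 hα2)
          (summable_natCast_mul_theta_mul_log hα1 (by linarith))

lemma EReal.zero_lt_liminf_le_limsup_lt_top_of_eventually_mem_Icc {ι : Type*} {l : Filter ι}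
    [l.NeBot] {f : ι → ℝ} {a b : ℝ} (ha : 0 < a) (hf : ∀ᶠ x in l, f x ∈ Icc a b) :
    0 < liminf (fun x => (f x : EReal)) l ∧
      liminf (fun x => (f x : EReal)) l ≤ limsup (fun x => (f x : EReal)) l ∧
      limsup (fun x => (f x : EReal)) l < ⊤ := by
  refine ⟨?_, liminf_le_limsup, ?_⟩
  · refine (EReal.coe_pos.mpr ha).trans_le (le_liminf_of_le (by isBoundedDefault) ?_)
    exact hf.mono fun x hx => EReal.coe_le_coe_iff.mpr hx.1
  · refine (limsup_le_of_le (by isBoundedDefault) ?_).trans_lt (EReal.coe_lt_top b)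
    exact hf.mono fun x hx => EReal.coe_le_coe_iff.mpr hx.2

/-- `0 < liminf_{α↓1} (α−1)² ∑_{k≥2} k θ_α(k) log k ≤ limsup_{α↓1} (α−1)² ∑_{k≥2} k θ_α(k) log k < ∞`. -/
theorem stmt_9 :
    0 < Filter.liminf
        (fun α : ℝ => (((α - 1) ^ 2 * ∑' k : ℕ, (k : ℝ) * theta α k * Real.log k : ℝ) : EReal))
        (nhdsWithin 1 (Set.Ioi 1)) ∧
    Filter.liminf
        (fun α : ℝ => (((α - 1) ^ 2 * ∑' k : ℕ, (k : ℝ) * theta α k * Real.log k : ℝ) : EReal))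
        (nhdsWithin 1 (Set.Ioi 1))
      ≤ Filter.limsup
        (fun α : ℝ => (((α - 1) ^ 2 * ∑' k : ℕ, (k : ℝ) * theta α k * Real.log k : ℝ) : EReal))
        (nhdsWithin 1 (Set.Ioi 1)) ∧
    Filter.limsup
        (fun α : ℝ => (((α - 1) ^ 2 * ∑' k : ℕ, (k : ℝ) * theta α k * Real.log k : ℝ) : EReal))
        (nhdsWithin 1 (Set.Ioi 1)) < ⊤ := by
  refine EReal.zero_lt_liminf_le_limsup_lt_top_of_eventually_mem_Icc
    (a := exp (-1) / 12) (b := 56) (by positivity) ?_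
  filter_upwards [Ioc_mem_nhdsGT (by norm_num : (1 : ℝ) < 3 / 2)] with α ⟨hα1, hα2⟩
  have hsq : 0 < (α - 1) ^ 2 := by nlinarith
  have hlower := (div_le_iff₀' (by positivity)).mp (le_tsum_natCast_mul_theta_mul_log hα1 hα2)
  have hupper := (le_div_iff₀' hsq).mp (tsum_natCast_mul_theta_mul_log_le hα1 (by linarith))
  exact ⟨by linarith, hupper⟩
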